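/- arXiv:2310.17350 — 2 statements merged into one kernel-verified Lean document; each statement's English description precedes it below -/
import Mathlib

section
/- Let H be a real Hilbert space, let 0<ν<1, let t>0, and let φ:(0,t)→H be square-integrable. Then ‖(𝓘φ)(t)‖² ≤ ω_{2−ν}(t) · (𝓘^{1−ν} g)(t), where g(s)=‖(𝓘^ν φ)(s)‖². -/
/-!
Fubini on the triangle `0 < r < s ≤ t` and the Beta integral
`∫ₐᵇ ω_α(b - s) ω_β(s - a) ds = ω_{α+β}(b - a)` give the semigroup law `𝓘^α 𝓘^β = 𝓘^{α+β}`, so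
`(𝓘φ)(t) = ∫₀ᵗ ω_{1-ν}(t - s) (𝓘^ν φ)(s) ds`, and Cauchy–Schwarz for the weight
`ω_{1-ν}(t - ·)`, whose mass is `ω_{2-ν}(t)`, gives the inequality. Since a divergent Bochner
integral is `0`, the right-hand side must also be shown finite: Cauchy–Schwarz inside `𝓘^ν φ` and
the semigroup law for lower Lebesgue integrals bound it by `ω_{1+ν}(t) ‖φ‖²_{L²(0,t)}`.
-/

open MeasureTheory intervalIntegral

/-- The Riemann–Liouville kernel `ω_α(t) = t^(α-1)/Γ(α)`. -/
noncomputable def rlKernel (α t : ℝ) : ℝ := t ^ (α - 1) / Real.Gamma α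

/-- The Riemann–Liouville fractional integral `(𝓘^α φ)(t) = ∫₀ᵗ ω_α(t-s) φ(s) ds`. -/
noncomputable def fracInt {H : Type*} [NormedAddCommGroup H] [NormedSpace ℝ H]
    (α : ℝ) (φ : ℝ → H) (t : ℝ) : H :=
  ∫ s in (0:ℝ)..t, rlKernel α (t - s) • φ s

open Set ENNReal

section Kernel

variable {α β x : ℝ}

lemma rlKernel_nonneg (hα : 0 < α) (hx : 0 ≤ x) : 0 ≤ rlKernel α x :=
  div_nonneg (Real.rpow_nonneg hx _) (Real.Gamma_pos_of_pos hα).le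

@[simp]
lemma rlKernel_one (x : ℝ) : rlKernel 1 x = 1 := by
  simp [rlKernel]

@[fun_prop]
lemma measurable_rlKernel (α : ℝ) : Measurable (rlKernel α) := by
  unfold rlKernel; fun_prop

lemma rlKernel_le_rlKernel (hα : 1 ≤ α) {s t : ℝ} (hs : 0 ≤ s) (hst : s ≤ t) :
    rlKernel α s ≤ rlKernel α t :=
  div_le_div_of_nonneg_right (Real.rpow_le_rpow hs hst (by linarith))
    (Real.Gamma_pos_of_pos (by linarith)).le

lemma integral_rpow_mul_one_sub_rpow (hα : 0 < α) (hβ : 0 < β) :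
    ∫ x in (0 : ℝ)..1, x ^ (α - 1) * (1 - x) ^ (β - 1) =
      Real.Gamma α * Real.Gamma β / Real.Gamma (α + β) := by
  have hcpow : ∀ x ∈ uIcc (0 : ℝ) 1, ((x : ℂ) ^ ((α : ℂ) - 1) * (1 - (x : ℂ)) ^ ((β : ℂ) - 1)) =
      ((x ^ (α - 1) * (1 - x) ^ (β - 1) : ℝ) : ℂ) := by
    intro x hx
    rw [uIcc_of_le zero_le_one] at hx
    rw [Complex.ofReal_mul, Complex.ofReal_cpow hx.1, Complex.ofReal_cpow (by linarith [hx.2])]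
    push_cast
    rfl
  have hB := Complex.Gamma_mul_Gamma_eq_betaIntegral (s := α) (t := β) (by simpa) (by simpa)
  rw [Complex.betaIntegral, intervalIntegral.integral_congr hcpow, intervalIntegral.integral_ofReal,
    ← Complex.ofReal_add, Complex.Gamma_ofReal, Complex.Gamma_ofReal, Complex.Gamma_ofReal,
    ← Complex.ofReal_mul, ← Complex.ofReal_mul, Complex.ofReal_inj] at hB
  rw [hB, mul_div_cancel_left₀ _ (Real.Gamma_pos_of_pos (add_pos hα hβ)).ne']

lemma integral_rlKernel_mul_rlKernel (hα : 0 < α) (hβ : 0 < β) {a b : ℝ} (hab : a < b) :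
    ∫ s in a..b, rlKernel α (b - s) * rlKernel β (s - a) = rlKernel (α + β) (b - a) := by
  have hc : 0 < b - a := by linarith
  have hsubst : ∀ x ∈ uIcc (0 : ℝ) 1,
      rlKernel α (b - ((b - a) * x + a)) * rlKernel β ((b - a) * x + a - a) =
        (b - a) ^ (α + β - 2) / (Real.Gamma α * Real.Gamma β) *
          (x ^ (β - 1) * (1 - x) ^ (α - 1)) := by
    intro x hx
    rw [uIcc_of_le zero_le_one] at hx
    rw [show b - ((b - a) * x + a) = (b - a) * (1 - x) by ring,
      show (b - a) * x + a - a = (b - a) * x by ring, rlKernel, rlKernel,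
      Real.mul_rpow hc.le (by linarith [hx.2]), Real.mul_rpow hc.le hx.1,
      show α + β - 2 = (α - 1) + (β - 1) by ring, Real.rpow_add hc]
    ring
  have h := intervalIntegral.integral_comp_mul_add
    (fun s => rlKernel α (b - s) * rlKernel β (s - a)) hc.ne' a (a := 0) (b := 1)
  rw [intervalIntegral.integral_congr hsubst, intervalIntegral.integral_const_mul,
    integral_rpow_mul_one_sub_rpow hβ hα, mul_zero, zero_add, mul_one, sub_add_cancel] at h
  rw [smul_eq_mul, eq_inv_mul_iff_mul_eq₀ hc.ne'] at h
  rw [← h, rlKernel, show α + β - 2 = (α + β - 1) - 1 by ring, Real.rpow_sub_one hc.ne',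
    add_comm β α]
  have := Real.Gamma_pos_of_pos hα
  have := Real.Gamma_pos_of_pos hβ
  field_simp

lemma lintegral_rlKernel_mul_rlKernel (hα : 0 < α) (hβ : 0 < β) {a b : ℝ} (hab : a < b) :
    ∫⁻ s in Ioc a b, ENNReal.ofReal (rlKernel α (b - s)) * ENNReal.ofReal (rlKernel β (s - a)) =
      ENNReal.ofReal (rlKernel (α + β) (b - a)) := by
  have hval := integral_rlKernel_mul_rlKernel hα hβ hab
  have hpos : 0 < rlKernel (α + β) (b - a) :=
    div_pos (Real.rpow_pos_of_pos (by linarith) _) (Real.Gamma_pos_of_pos (add_pos hα hβ))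
  -- the integral is nonzero, so the integrand is integrable
  have hint := (intervalIntegrable_of_integral_ne_zero (hval ▸ hpos.ne')).1
  rw [intervalIntegral.integral_of_le hab.le] at hval
  rw [← hval, ofReal_integral_eq_lintegral_ofReal hint]
  · refine setLIntegral_congr_fun measurableSet_Ioc fun s hs => ?_
    exact (ENNReal.ofReal_mul (rlKernel_nonneg hα (sub_nonneg.2 hs.2))).symm
  · exact ae_restrict_of_forall_mem measurableSet_Ioc fun s hs =>
      mul_nonneg (rlKernel_nonneg hα (sub_nonneg.2 hs.2))
        (rlKernel_nonneg hβ (sub_nonneg.2 hs.1.le))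

end Kernel

section Triangle

variable {a b : ℝ}

lemma restrict_Ioc_restrict_Iio {s : ℝ} (hs : s ≤ b) :
    (volume.restrict (Ioc a b)).restrict (Iio s) = volume.restrict (Ioc a s) := by
  have hIoo : Iio s ∩ Ioc a b = Ioo a s := by
    ext x; simp only [mem_inter_iff, mem_Iio, mem_Ioc, mem_Ioo]; grind
  rw [Measure.restrict_restrict measurableSet_Iio, hIoo]
  exact Measure.restrict_congr_set Ioo_ae_eq_Ioc

lemma restrict_Ioc_restrict_Ioi {r : ℝ} (hr : a ≤ r) :
    (volume.restrict (Ioc a b)).restrict (Ioi r) = volume.restrict (Ioc r b) := by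
  rw [Measure.restrict_restrict measurableSet_Ioi, inter_comm, Ioc_inter_Ioi, max_eq_right hr]

lemma measurableSet_snd_lt_fst : MeasurableSet {p : ℝ × ℝ | p.2 < p.1} :=
  measurableSet_lt measurable_snd measurable_fst

lemma setLIntegral_indicator_snd_lt_fst_left (G : ℝ × ℝ → ℝ≥0∞) {s : ℝ} (hs : s ≤ b) :
    ∫⁻ r in Ioc a b, {p : ℝ × ℝ | p.2 < p.1}.indicator G (s, r) = ∫⁻ r in Ioc a s, G (s, r) := by
  change ∫⁻ r in Ioc a b, (Iio s).indicator (fun r => G (s, r)) r = _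
  rw [lintegral_indicator measurableSet_Iio, restrict_Ioc_restrict_Iio hs]

lemma setLIntegral_indicator_snd_lt_fst_right (G : ℝ × ℝ → ℝ≥0∞) {r : ℝ} (hr : a ≤ r) :
    ∫⁻ s in Ioc a b, {p : ℝ × ℝ | p.2 < p.1}.indicator G (s, r) = ∫⁻ s in Ioc r b, G (s, r) := by
  change ∫⁻ s in Ioc a b, (Ioi r).indicator (fun s => G (s, r)) s = _
  rw [lintegral_indicator measurableSet_Ioi, restrict_Ioc_restrict_Ioi hr]

variable {E : Type*} [NormedAddCommGroup E] [NormedSpace ℝ E]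

lemma setIntegral_indicator_snd_lt_fst_left (F : ℝ × ℝ → E) {s : ℝ} (hs : s ≤ b) :
    ∫ r in Ioc a b, {p : ℝ × ℝ | p.2 < p.1}.indicator F (s, r) = ∫ r in Ioc a s, F (s, r) := by
  change ∫ r in Ioc a b, (Iio s).indicator (fun r => F (s, r)) r = _
  rw [MeasureTheory.integral_indicator measurableSet_Iio, restrict_Ioc_restrict_Iio hs]

lemma setIntegral_indicator_snd_lt_fst_right (F : ℝ × ℝ → E) {r : ℝ} (hr : a ≤ r) :
    ∫ s in Ioc a b, {p : ℝ × ℝ | p.2 < p.1}.indicator F (s, r) = ∫ s in Ioc r b, F (s, r) := by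
  change ∫ s in Ioc a b, (Ioi r).indicator (fun s => F (s, r)) s = _
  rw [MeasureTheory.integral_indicator measurableSet_Ioi, restrict_Ioc_restrict_Ioi hr]

lemma lintegral_Ioc_lintegral_Ioc_swap {G : ℝ → ℝ → ℝ≥0∞}
    (hG : AEMeasurable (Function.uncurry G)
      ((volume.restrict (Ioc a b)).prod (volume.restrict (Ioc a b)))) :
    ∫⁻ s in Ioc a b, ∫⁻ r in Ioc a s, G s r = ∫⁻ r in Ioc a b, ∫⁻ s in Ioc r b, G s r := by
  calc ∫⁻ s in Ioc a b, ∫⁻ r in Ioc a s, G s r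
      = ∫⁻ s in Ioc a b, ∫⁻ r in Ioc a b,
          {p : ℝ × ℝ | p.2 < p.1}.indicator (Function.uncurry G) (s, r) :=
        setLIntegral_congr_fun measurableSet_Ioc fun s hs =>
          (setLIntegral_indicator_snd_lt_fst_left (Function.uncurry G) hs.2).symm
    _ = ∫⁻ r in Ioc a b, ∫⁻ s in Ioc a b,
          {p : ℝ × ℝ | p.2 < p.1}.indicator (Function.uncurry G) (s, r) :=
        lintegral_lintegral_swap (hG.indicator measurableSet_snd_lt_fst)
    _ = ∫⁻ r in Ioc a b, ∫⁻ s in Ioc r b, G s r :=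
        setLIntegral_congr_fun measurableSet_Ioc fun r hr =>
          setLIntegral_indicator_snd_lt_fst_right (Function.uncurry G) hr.1.le

lemma integral_Ioc_integral_Ioc_swap [CompleteSpace E] {F : ℝ → ℝ → E}
    (hF : AEStronglyMeasurable (Function.uncurry F)
      ((volume.restrict (Ioc a b)).prod (volume.restrict (Ioc a b))))
    (hfin : ∫⁻ s in Ioc a b, ∫⁻ r in Ioc a s, ‖F s r‖ₑ ≠ ∞) :
    ∫ s in Ioc a b, ∫ r in Ioc a s, F s r = ∫ r in Ioc a b, ∫ s in Ioc r b, F s r := by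
  have hFT := hF.indicator measurableSet_snd_lt_fst
  have hint : Integrable ({p : ℝ × ℝ | p.2 < p.1}.indicator (Function.uncurry F))
      ((volume.restrict (Ioc a b)).prod (volume.restrict (Ioc a b))) := by
    refine ⟨hFT, ?_⟩
    rw [HasFiniteIntegral, lintegral_prod _ hFT.enorm, lt_top_iff_ne_top]
    simp_rw [enorm_indicator_eq_indicator_enorm]
    rwa [setLIntegral_congr_fun measurableSet_Ioc fun s hs =>
      setLIntegral_indicator_snd_lt_fst_left (fun p => ‖Function.uncurry F p‖ₑ) hs.2]
  calc ∫ s in Ioc a b, ∫ r in Ioc a s, F s r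
      = ∫ s in Ioc a b, ∫ r in Ioc a b,
          {p : ℝ × ℝ | p.2 < p.1}.indicator (Function.uncurry F) (s, r) :=
        setIntegral_congr_fun measurableSet_Ioc fun s hs =>
          (setIntegral_indicator_snd_lt_fst_left (Function.uncurry F) hs.2).symm
    _ = ∫ r in Ioc a b, ∫ s in Ioc a b,
          {p : ℝ × ℝ | p.2 < p.1}.indicator (Function.uncurry F) (s, r) :=
        integral_integral_swap hint
    _ = ∫ r in Ioc a b, ∫ s in Ioc r b, F s r :=
        setIntegral_congr_fun measurableSet_Ioc fun r hr =>
          setIntegral_indicator_snd_lt_fst_right (Function.uncurry F) hr.1.le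

end Triangle

noncomputable def fracLintegral (α : ℝ) (g : ℝ → ℝ≥0∞) (t : ℝ) : ℝ≥0∞ :=
  ∫⁻ s in Ioc 0 t, ENNReal.ofReal (rlKernel α (t - s)) * g s

section Semigroup

variable {α β t : ℝ}

lemma fracLintegral_fracLintegral (hα : 0 < α) (hβ : 0 < β) {g : ℝ → ℝ≥0∞}
    (hg : AEMeasurable g (volume.restrict (Ioc 0 t))) :
    fracLintegral α (fracLintegral β g) t = fracLintegral (α + β) g t := by
  have hG : AEMeasurable (fun p : ℝ × ℝ => ENNReal.ofReal (rlKernel α (t - p.1)) *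
      ENNReal.ofReal (rlKernel β (p.1 - p.2)) * g p.2)
      ((volume.restrict (Ioc 0 t)).prod (volume.restrict (Ioc 0 t))) :=
    (by fun_prop : Measurable fun p : ℝ × ℝ => ENNReal.ofReal (rlKernel α (t - p.1)) *
      ENNReal.ofReal (rlKernel β (p.1 - p.2))).aemeasurable.mul hg.comp_snd
  calc fracLintegral α (fracLintegral β g) t
      = ∫⁻ s in Ioc 0 t, ∫⁻ r in Ioc 0 s, ENNReal.ofReal (rlKernel α (t - s)) *
          ENNReal.ofReal (rlKernel β (s - r)) * g r := by
        simp_rw [fracLintegral, ← lintegral_const_mul' _ _ ofReal_ne_top, mul_assoc]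
    _ = ∫⁻ r in Ioc 0 t, ∫⁻ s in Ioc r t, ENNReal.ofReal (rlKernel α (t - s)) *
          ENNReal.ofReal (rlKernel β (s - r)) * g r :=
        lintegral_Ioc_lintegral_Ioc_swap hG
    _ = ∫⁻ r in Ioo 0 t, (∫⁻ s in Ioc r t, ENNReal.ofReal (rlKernel α (t - s)) *
          ENNReal.ofReal (rlKernel β (s - r))) * g r := by
        rw [setLIntegral_congr Ioo_ae_eq_Ioc.symm]
        refine setLIntegral_congr_fun measurableSet_Ioo fun r _ => ?_
        exact lintegral_mul_const _ (by fun_prop)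
    _ = fracLintegral (α + β) g t := by
        rw [fracLintegral, ← setLIntegral_congr Ioo_ae_eq_Ioc]
        refine setLIntegral_congr_fun measurableSet_Ioo fun r hr => ?_
        rw [lintegral_rlKernel_mul_rlKernel hα hβ hr.2]

variable {H : Type*} [NormedAddCommGroup H] [NormedSpace ℝ H] {φ : ℝ → H}

lemma fracInt_eq_setIntegral (α : ℝ) (φ : ℝ → H) (ht : 0 ≤ t) :
    fracInt α φ t = ∫ s in Ioc 0 t, rlKernel α (t - s) • φ s :=
  intervalIntegral.integral_of_le ht

lemma fracInt_fracInt [CompleteSpace H] (hα : 0 < α) (hβ : 0 < β) (ht : 0 ≤ t)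
    (hφ : AEStronglyMeasurable φ (volume.restrict (Ioc 0 t)))
    (hfin : fracLintegral (α + β) (fun r => ‖φ r‖ₑ) t ≠ ∞) :
    fracInt α (fracInt β φ) t = fracInt (α + β) φ t := by
  have hF : AEStronglyMeasurable
      (fun p : ℝ × ℝ => (rlKernel α (t - p.1) * rlKernel β (p.1 - p.2)) • φ p.2)
      ((volume.restrict (Ioc 0 t)).prod (volume.restrict (Ioc 0 t))) :=
    (by fun_prop : Measurable fun p : ℝ × ℝ =>
      rlKernel α (t - p.1) * rlKernel β (p.1 - p.2)).aestronglyMeasurable.smul hφ.comp_snd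
  have hFfin : ∫⁻ s in Ioc 0 t, ∫⁻ r in Ioc 0 s,
      ‖(rlKernel α (t - s) * rlKernel β (s - r)) • φ r‖ₑ ≠ ∞ := by
    rw [← fracLintegral_fracLintegral hα hβ hφ.enorm] at hfin
    convert hfin using 1
    refine setLIntegral_congr_fun measurableSet_Ioc fun s hs => ?_
    rw [fracLintegral, ← lintegral_const_mul' _ _ ofReal_ne_top]
    refine setLIntegral_congr_fun measurableSet_Ioc fun r hr => ?_
    rw [enorm_smul, ← mul_assoc, ← ENNReal.ofReal_mul (rlKernel_nonneg hα (sub_nonneg.2 hs.2)),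
      Real.enorm_eq_ofReal (mul_nonneg (rlKernel_nonneg hα (sub_nonneg.2 hs.2))
        (rlKernel_nonneg hβ (sub_nonneg.2 hr.2)))]
  rw [fracInt_eq_setIntegral _ _ ht, fracInt_eq_setIntegral _ _ ht]
  calc ∫ s in Ioc 0 t, rlKernel α (t - s) • fracInt β φ s
      = ∫ s in Ioc 0 t, ∫ r in Ioc 0 s, (rlKernel α (t - s) * rlKernel β (s - r)) • φ r := by
        refine setIntegral_congr_fun measurableSet_Ioc fun s hs => ?_
        simp_rw [fracInt_eq_setIntegral _ _ hs.1.le, mul_smul, MeasureTheory.integral_smul]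
    _ = ∫ r in Ioc 0 t, ∫ s in Ioc r t, (rlKernel α (t - s) * rlKernel β (s - r)) • φ r :=
        integral_Ioc_integral_Ioc_swap hF hFfin
    _ = ∫ r in Ioc 0 t, rlKernel (α + β) (t - r) • φ r := by
        rw [← setIntegral_congr_set Ioo_ae_eq_Ioc, ← setIntegral_congr_set Ioo_ae_eq_Ioc]
        refine setIntegral_congr_fun measurableSet_Ioo fun r hr => ?_
        rw [_root_.integral_smul_const, ← intervalIntegral.integral_of_le hr.2.le,
          integral_rlKernel_mul_rlKernel hα hβ hr.2]

end Semigroup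

section CauchySchwarz

lemma lintegral_mul_sq_le {X : Type*} [MeasurableSpace X] {μ : Measure X} {k f : X → ℝ≥0∞}
    (hk : AEMeasurable k μ) (hf : AEMeasurable f μ) :
    (∫⁻ x, k x * f x ∂μ) ^ 2 ≤ (∫⁻ x, k x ∂μ) * ∫⁻ x, k x * f x ^ 2 ∂μ := by
  have hsqrt : ∀ a b : ℝ≥0∞,
      a ^ ((2 : ℕ) : ℝ)⁻¹ * b ^ ((2 : ℕ) : ℝ)⁻¹ = (a * b) ^ ((2 : ℕ) : ℝ)⁻¹ :=
    fun a b => (ENNReal.mul_rpow_of_nonneg _ _ (by positivity)).symm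
  have hHolder := ENNReal.lintegral_mul_norm_pow_le hk (hk.mul (hf.pow_const 2))
    (p := ((2 : ℕ) : ℝ)⁻¹) (q := ((2 : ℕ) : ℝ)⁻¹) (by positivity) (by positivity) (by norm_num)
  simp_rw [Pi.mul_apply, hsqrt,
    show ∀ x, k x * (k x * f x ^ 2) = (k x * f x) ^ 2 from fun x => by ring,
    ENNReal.pow_rpow_inv_natCast two_ne_zero] at hHolder
  have := pow_le_pow_left₀ zero_le hHolder 2
  rwa [ENNReal.rpow_inv_natCast_pow two_ne_zero] at this

variable {α β t : ℝ} {H : Type*} [NormedAddCommGroup H] [NormedSpace ℝ H]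

lemma fracLintegral_one_right (hα : 0 < α) (ht : 0 < t) :
    fracLintegral α 1 t = ENNReal.ofReal (rlKernel (α + 1) t) := by
  simpa [fracLintegral] using lintegral_rlKernel_mul_rlKernel hα one_pos ht

lemma enorm_fracInt_sq_le {f : ℝ → H} (hα : 0 < α) (ht : 0 < t)
    (hf : AEStronglyMeasurable f (volume.restrict (Ioc 0 t))) :
    ‖fracInt α f t‖ₑ ^ 2 ≤
      ENNReal.ofReal (rlKernel (α + 1) t) * fracLintegral α (fun s => ‖f s‖ₑ ^ 2) t := by
  calc ‖fracInt α f t‖ₑ ^ 2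
      ≤ (∫⁻ s in Ioc 0 t, ENNReal.ofReal (rlKernel α (t - s)) * ‖f s‖ₑ) ^ 2 := by
        rw [fracInt_eq_setIntegral _ _ ht.le]
        gcongr
        refine (enorm_integral_le_lintegral_enorm _).trans_eq ?_
        refine setLIntegral_congr_fun measurableSet_Ioc fun s hs => ?_
        rw [enorm_smul, Real.enorm_eq_ofReal (rlKernel_nonneg hα (sub_nonneg.2 hs.2))]
    _ ≤ fracLintegral α 1 t * fracLintegral α (fun s => ‖f s‖ₑ ^ 2) t := by
        simpa [fracLintegral] using lintegral_mul_sq_le (by fun_prop) hf.enorm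
    _ = ENNReal.ofReal (rlKernel (α + 1) t) * fracLintegral α (fun s => ‖f s‖ₑ ^ 2) t := by
        rw [fracLintegral_one_right hα ht]

lemma norm_fracInt_sq_le {f : ℝ → H} (hα : 0 < α) (ht : 0 < t)
    (hf : AEStronglyMeasurable f (volume.restrict (Ioc 0 t)))
    (hfin : fracLintegral α (fun s => ‖f s‖ₑ ^ 2) t ≠ ∞) :
    ‖fracInt α f t‖ ^ 2 ≤ rlKernel (α + 1) t * fracInt α (fun s => ‖f s‖ ^ 2) t := by
  have hreal : fracInt α (fun s => ‖f s‖ ^ 2) t =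
      (fracLintegral α (fun s => ‖f s‖ₑ ^ 2) t).toReal := by
    rw [fracInt_eq_setIntegral _ _ ht.le, integral_eq_lintegral_of_nonneg_ae]
    · congr 1
      refine setLIntegral_congr_fun measurableSet_Ioc fun s hs => ?_
      rw [smul_eq_mul, ENNReal.ofReal_mul (rlKernel_nonneg hα (sub_nonneg.2 hs.2)),
        ENNReal.ofReal_pow (norm_nonneg _), ofReal_norm]
    · exact ae_restrict_of_forall_mem measurableSet_Ioc fun s hs =>
        mul_nonneg (rlKernel_nonneg hα (sub_nonneg.2 hs.2)) (sq_nonneg _)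
    · exact (by fun_prop : Measurable fun s => rlKernel α (t - s)).aestronglyMeasurable.smul
        (hf.norm.pow 2)
  rw [hreal, ← ENNReal.toReal_ofReal (rlKernel_nonneg (by linarith) ht.le), ← ENNReal.toReal_mul,
    ← toReal_enorm, ← ENNReal.toReal_pow]
  exact ENNReal.toReal_mono (mul_ne_top ofReal_ne_top hfin) (enorm_fracInt_sq_le hα ht hf)

lemma aestronglyMeasurable_fracInt [CompleteSpace H] (β : ℝ) {φ : ℝ → H}
    (hφ : AEStronglyMeasurable φ (volume.restrict (Ioc 0 t))) :
    AEStronglyMeasurable (fracInt β φ) (volume.restrict (Ioc 0 t)) := by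
  have hF : AEStronglyMeasurable
      ({p : ℝ × ℝ | p.2 < p.1}.indicator fun p => rlKernel β (p.1 - p.2) • φ p.2)
      ((volume.restrict (Ioc 0 t)).prod (volume.restrict (Ioc 0 t))) :=
    ((by fun_prop : Measurable fun p : ℝ × ℝ => rlKernel β (p.1 - p.2)).aestronglyMeasurable.smul
      hφ.comp_snd).indicator measurableSet_snd_lt_fst
  refine hF.integral_prod_right'.congr ?_
  filter_upwards [ae_restrict_mem measurableSet_Ioc] with s hs
  rw [setIntegral_indicator_snd_lt_fst_left _ hs.2, fracInt_eq_setIntegral _ _ hs.1.le]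

lemma fracLintegral_enorm_fracInt_sq_le (hα : 0 < α) (hβ : 0 < β) {φ : ℝ → H}
    (hφ : AEStronglyMeasurable φ (volume.restrict (Ioc 0 t))) :
    fracLintegral α (fun s => ‖fracInt β φ s‖ₑ ^ 2) t ≤
      ENNReal.ofReal (rlKernel (β + 1) t) * fracLintegral (α + β) (fun r => ‖φ r‖ₑ ^ 2) t := by
  calc fracLintegral α (fun s => ‖fracInt β φ s‖ₑ ^ 2) t
      ≤ fracLintegral α (fun s => ENNReal.ofReal (rlKernel (β + 1) t) *
          fracLintegral β (fun r => ‖φ r‖ₑ ^ 2) s) t := by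
        refine lintegral_mono_ae (ae_restrict_of_forall_mem measurableSet_Ioc fun s hs => ?_)
        have hφs := hφ.mono_measure (Measure.restrict_mono (Ioc_subset_Ioc_right hs.2) le_rfl)
        dsimp only
        gcongr
        refine (enorm_fracInt_sq_le hβ hs.1 hφs).trans ?_
        gcongr
        exact rlKernel_le_rlKernel (by linarith) hs.1.le hs.2
    _ = ENNReal.ofReal (rlKernel (β + 1) t) *
          fracLintegral α (fracLintegral β fun r => ‖φ r‖ₑ ^ 2) t := by
        simp_rw [fracLintegral, mul_left_comm (ENNReal.ofReal (rlKernel α _))]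
        exact lintegral_const_mul' _ _ ofReal_ne_top
    _ = ENNReal.ofReal (rlKernel (β + 1) t) * fracLintegral (α + β) (fun r => ‖φ r‖ₑ ^ 2) t := by
        rw [fracLintegral_fracLintegral hα hβ (hφ.enorm.pow_const 2)]

end CauchySchwarz

theorem stmt3 {H : Type*} [NormedAddCommGroup H] [InnerProductSpace ℝ H] [CompleteSpace H]
    (ν t : ℝ) (hν : 0 < ν) (hν1 : ν < 1) (ht : 0 < t)
    (φ : ℝ → H) (hφ : MemLp φ 2 (volume.restrict (Set.Ioo 0 t))) :
    ‖fracInt 1 φ t‖ ^ 2 ≤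
      rlKernel (2 - ν) t * fracInt (1 - ν) (fun s => ‖fracInt ν φ s‖ ^ 2) t := by
  have hν' : 0 < 1 - ν := by linarith
  rw [Measure.restrict_congr_set Ioo_ae_eq_Ioc] at hφ
  have hφm := hφ.aestronglyMeasurable
  have hL1 : fracLintegral (1 - ν + ν) (fun r => ‖φ r‖ₑ) t ≠ ∞ := by
    simpa [fracLintegral] using (hφ.integrable one_le_two).hasFiniteIntegral.ne
  have hL2 : fracLintegral (1 - ν + ν) (fun r => ‖φ r‖ₑ ^ 2) t ≠ ∞ := by
    simpa [fracLintegral] using (hφ.integrable_norm_pow two_ne_zero).hasFiniteIntegral.ne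
  calc ‖fracInt 1 φ t‖ ^ 2 = ‖fracInt (1 - ν) (fracInt ν φ) t‖ ^ 2 := by
        rw [fracInt_fracInt hν' hν ht.le hφm hL1, sub_add_cancel]
    _ ≤ rlKernel (1 - ν + 1) t * fracInt (1 - ν) (fun s => ‖fracInt ν φ s‖ ^ 2) t :=
        norm_fracInt_sq_le hν' ht (aestronglyMeasurable_fracInt ν hφm) <|
          ne_top_of_le_ne_top (mul_ne_top ofReal_ne_top hL2)
            (fracLintegral_enorm_fracInt_sq_le hν' hν hφm)
    _ = rlKernel (2 - ν) t * fracInt (1 - ν) (fun s => ‖fracInt ν φ s‖ ^ 2) t := by ring_nf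
end

section
/- Discrete fractional integral of a power: let 0<α<1 and β>−1. There exists a constant C>0, depending only on α and β, such that for every τ>0 and every integer n≥1, τ^α Σ_{j=1}^n a_{n−j}^{(−α)} (jτ)^β ≤ C (nτ)^{α+β}. -/
/-!
The weights `a_k^{(-α)} = α(α+1)⋯(α+k-1)/k!` satisfy `a_{k+1} = a_k (k+α)/(k+1)`, and Bernoulli's
inequality turns this ratio recursion into `0 ≤ a_k^{(-α)} ≤ (k+1)^{α-1}`. Comparing with the
telescoping sum of `k^p - (k-1)^p ≥ p k^{p-1}` gives `Σ_{k=1}^n k^{p-1} ≤ n^p/p` for `0 < p ≤ 1`,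
hence `Σ_j a_{n-j}^{(-α)} ≤ n^α/α`. Both sides scale like `τ^{α+β}`, so it suffices to take `τ = 1`.
For `β ≥ 0` bound `j^β ≤ n^β`; for `β < 0` split the sum at `j = n/2`: on the first half
`a_{n-j}^{(-α)} ≤ (n/2)^{α-1}` and `Σ j^β ≤ n^{β+1}/(β+1)`, on the second half `j^β ≤ (n/2)^β`.
-/

/-- The convolution quadrature weight `a_j^{(β)} = (-1)^j (β choose j)`, where
`(β choose j) = β(β-1)⋯(β-j+1)/j!` is the generalized binomial coefficient. -/
noncomputable def cqWeight (β : ℝ) (j : ℕ) : ℝ :=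
  (-1) ^ j * ((∏ i ∈ Finset.range j, (β - i)) / (j.factorial : ℝ))

open Finset Real

theorem one_sub_mul_le_one_add_rpow_neg {t q : ℝ} (ht : 0 ≤ t) (hq0 : 0 ≤ q) (hq1 : q ≤ 1) :
    1 - q * t ≤ (1 + t) ^ (-q) := by
  have hpos : 0 < (1 + t) ^ q := by positivity
  have hbern : (1 + t) ^ q ≤ 1 + q * t :=
    rpow_one_add_le_one_add_mul_self (by linarith) hq0 hq1
  rw [rpow_neg (by linarith), ← one_div, le_div_iff₀ hpos]
  rcases le_total (q * t) 1 with h | h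
  · nlinarith [mul_nonneg hq0 ht]
  · nlinarith

theorem mul_rpow_sub_one_le_rpow_sub_rpow {p x : ℝ} (hp0 : 0 ≤ p) (hp1 : p ≤ 1) (hx : 1 ≤ x) :
    p * x ^ (p - 1) ≤ x ^ p - (x - 1) ^ p := by
  have hx0 : 0 < x := by linarith
  have hs : -1 ≤ -x⁻¹ := neg_le_neg (inv_le_one_of_one_le₀ hx)
  have hbern : (1 + -x⁻¹) ^ p ≤ 1 + p * -x⁻¹ := rpow_one_add_le_one_add_mul_self hs hp0 hp1
  have hsplit : (x - 1) ^ p = x ^ p * (1 + -x⁻¹) ^ p := by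
    rw [← mul_rpow hx0.le (by linarith)]
    congr 1
    field_simp
    ring
  have hpow : x ^ (p - 1) = x ^ p * x⁻¹ := by rw [rpow_sub_one hx0.ne', div_eq_mul_inv]
  rw [hsplit, hpow]
  nlinarith [rpow_pos_of_pos hx0 p]

theorem sum_Icc_rpow_sub_one_le {p : ℝ} (hp0 : 0 < p) (hp1 : p ≤ 1) (n : ℕ) :
    ∑ k ∈ Icc 1 n, (k : ℝ) ^ (p - 1) ≤ (n : ℝ) ^ p / p := by
  induction n with
  | zero => simp [zero_rpow hp0.ne']
  | succ n ih =>
    rw [sum_Icc_succ_top (by omega), le_div_iff₀ hp0, add_mul]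
    have hstep := mul_rpow_sub_one_le_rpow_sub_rpow hp0.le hp1 (x := ((n + 1 : ℕ) : ℝ))
      (by simp)
    rw [le_div_iff₀ hp0] at ih
    push_cast at hstep ⊢
    rw [add_sub_cancel_right] at hstep
    linarith

theorem sum_Icc_reflect {M : Type*} [AddCommMonoid M] (f : ℕ → M) (n : ℕ) :
    ∑ j ∈ Icc 1 n, f (n + 1 - j) = ∑ j ∈ Icc 1 n, f j := by
  rw [← Ico_add_one_right_eq_Icc, sum_Ico_reflect f 1 (Nat.le_succ _)]
  simp

theorem cqWeight_zero (β : ℝ) : cqWeight β 0 = 1 := by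
  simp [cqWeight]

theorem cqWeight_succ (β : ℝ) (j : ℕ) :
    cqWeight β (j + 1) = cqWeight β j * ((j - β) / (j + 1)) := by
  simp only [cqWeight, prod_range_succ, pow_succ, Nat.factorial_succ, Nat.cast_mul]
  push_cast
  field_simp
  ring

theorem cqWeight_nonneg_of_nonpos {β : ℝ} (hβ : β ≤ 0) (j : ℕ) : 0 ≤ cqWeight β j := by
  induction j with
  | zero => simp [cqWeight_zero]
  | succ j ih =>
    rw [cqWeight_succ]
    exact mul_nonneg ih (div_nonneg (by linarith [j.cast_nonneg (α := ℝ)]) (by positivity))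

theorem cqWeight_neg_le_rpow {α : ℝ} (hα0 : 0 ≤ α) (hα1 : α ≤ 1) (j : ℕ) :
    cqWeight (-α) j ≤ ((j : ℝ) + 1) ^ (α - 1) := by
  induction j with
  | zero => simp [cqWeight_zero]
  | succ j ih =>
    have hj : (0 : ℝ) < j + 1 := by positivity
    have hratio : ((j : ℝ) - -α) / (j + 1) = 1 - (1 - α) * ((j : ℝ) + 1)⁻¹ := by
      field_simp
      ring
    have hnext : ((j + 1 : ℕ) : ℝ) + 1 = ((j : ℝ) + 1) * (1 + ((j : ℝ) + 1)⁻¹) := by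
      push_cast
      field_simp
    rw [cqWeight_succ, hnext, mul_rpow hj.le (by positivity), hratio]
    refine mul_le_mul ih ?_ ?_ (by positivity)
    · have := one_sub_mul_le_one_add_rpow_neg (q := 1 - α) (inv_nonneg.2 hj.le) (by linarith)
        (by linarith)
      rwa [neg_sub] at this
    · rw [← hratio]
      exact div_nonneg (by linarith) hj.le

theorem sum_Icc_cqWeight_neg_le {α : ℝ} (hα0 : 0 < α) (hα1 : α ≤ 1) (n : ℕ) :
    ∑ j ∈ Icc 1 n, cqWeight (-α) (n - j) ≤ (n : ℝ) ^ α / α :=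
  calc ∑ j ∈ Icc 1 n, cqWeight (-α) (n - j)
      ≤ ∑ j ∈ Icc 1 n, ((n + 1 - j : ℕ) : ℝ) ^ (α - 1) := by
        refine sum_le_sum fun j hj => ?_
        have hjn : j ≤ n := (mem_Icc.1 hj).2
        rw [show n + 1 - j = (n - j) + 1 by omega, Nat.cast_succ]
        exact cqWeight_neg_le_rpow hα0.le hα1 _
    _ = ∑ j ∈ Icc 1 n, (j : ℝ) ^ (α - 1) := sum_Icc_reflect (fun k => (k : ℝ) ^ (α - 1)) n
    _ ≤ (n : ℝ) ^ α / α := sum_Icc_rpow_sub_one_le hα0 hα1 n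

theorem sum_cqWeight_mul_rpow_le_of_nonneg {α β : ℝ} (hα0 : 0 < α) (hα1 : α ≤ 1) (hβ : 0 ≤ β)
    (n : ℕ) :
    ∑ j ∈ Icc 1 n, cqWeight (-α) (n - j) * (j : ℝ) ^ β ≤ α⁻¹ * (n : ℝ) ^ (α + β) :=
  calc ∑ j ∈ Icc 1 n, cqWeight (-α) (n - j) * (j : ℝ) ^ β
      ≤ ∑ j ∈ Icc 1 n, cqWeight (-α) (n - j) * (n : ℝ) ^ β := by
        refine sum_le_sum fun j hj => mul_le_mul_of_nonneg_left ?_ ?_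
        · exact rpow_le_rpow j.cast_nonneg (Nat.cast_le.2 (mem_Icc.1 hj).2) hβ
        · exact cqWeight_nonneg_of_nonpos (by linarith) _
    _ = (∑ j ∈ Icc 1 n, cqWeight (-α) (n - j)) * (n : ℝ) ^ β := (sum_mul ..).symm
    _ ≤ (n : ℝ) ^ α / α * (n : ℝ) ^ β :=
        mul_le_mul_of_nonneg_right (sum_Icc_cqWeight_neg_le hα0 hα1 n) (by positivity)
    _ = α⁻¹ * (n : ℝ) ^ (α + β) := by
        rw [rpow_add' n.cast_nonneg (by linarith)]
        ring

theorem sum_cqWeight_mul_rpow_le_of_nonpos {α β : ℝ} (hα0 : 0 < α) (hα1 : α ≤ 1) (hβ1 : -1 < β)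
    (hβ0 : β ≤ 0) {n : ℕ} (hn : 0 < n) :
    ∑ j ∈ Icc 1 n, cqWeight (-α) (n - j) * (j : ℝ) ^ β ≤
      ((2⁻¹ : ℝ) ^ (α - 1) / (β + 1) + (2⁻¹ : ℝ) ^ β / α) * (n : ℝ) ^ (α + β) := by
  have hn0 : (0 : ℝ) < n := Nat.cast_pos.2 hn
  set h : ℝ := n * 2⁻¹ with h_def
  have hh : 0 < h := by positivity
  -- A term is small through its weight when `j ≤ n/2` and through `j ^ β` when `j > n/2`.
  have hterm : ∀ j ∈ Icc 1 n, cqWeight (-α) (n - j) * (j : ℝ) ^ β ≤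
      h ^ (α - 1) * (j : ℝ) ^ β + h ^ β * cqWeight (-α) (n - j) := by
    intro j hj
    have hjn : j ≤ n := (mem_Icc.1 hj).2
    have hw := cqWeight_nonneg_of_nonpos (neg_nonpos.2 hα0.le) (n - j)
    have hjβ := rpow_nonneg j.cast_nonneg β
    rcases le_or_gt (j : ℝ) h with hjh | hjh
    · have hwh : cqWeight (-α) (n - j) ≤ h ^ (α - 1) := by
        refine (cqWeight_neg_le_rpow hα0.le hα1 _).trans (rpow_le_rpow_of_nonpos hh ?_ (by linarith))
        rw [Nat.cast_sub hjn]
        linarith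
      nlinarith [mul_le_mul_of_nonneg_right hwh hjβ, mul_nonneg (rpow_nonneg hh.le β) hw]
    · have hjβh : (j : ℝ) ^ β ≤ h ^ β := rpow_le_rpow_of_nonpos hh hjh.le hβ0
      nlinarith [mul_le_mul_of_nonneg_left hjβh hw, mul_nonneg (rpow_nonneg hh.le (α - 1)) hjβ]
  have hhalf (γ δ : ℝ) : h ^ γ * (n : ℝ) ^ δ = (2⁻¹ : ℝ) ^ γ * (n : ℝ) ^ (γ + δ) := by
    rw [h_def, mul_rpow hn0.le (by norm_num), rpow_add hn0]
    ring
  calc ∑ j ∈ Icc 1 n, cqWeight (-α) (n - j) * (j : ℝ) ^ β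
      ≤ ∑ j ∈ Icc 1 n, (h ^ (α - 1) * (j : ℝ) ^ β + h ^ β * cqWeight (-α) (n - j)) :=
        sum_le_sum hterm
    _ = h ^ (α - 1) * ∑ j ∈ Icc 1 n, (j : ℝ) ^ β + h ^ β * ∑ j ∈ Icc 1 n, cqWeight (-α) (n - j) := by
        rw [sum_add_distrib, mul_sum, mul_sum]
    _ ≤ h ^ (α - 1) * ((n : ℝ) ^ (β + 1) / (β + 1)) + h ^ β * ((n : ℝ) ^ α / α) := by
        gcongr
        · simpa using sum_Icc_rpow_sub_one_le (p := β + 1) (by linarith) (by linarith) n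
        · exact sum_Icc_cqWeight_neg_le hα0 hα1 n
    _ = ((2⁻¹ : ℝ) ^ (α - 1) / (β + 1) + (2⁻¹ : ℝ) ^ β / α) * (n : ℝ) ^ (α + β) := by
        rw [mul_div_assoc', mul_div_assoc', hhalf, hhalf]
        ring_nf

theorem exists_sum_cqWeight_mul_rpow_le {α β : ℝ} (hα0 : 0 < α) (hα1 : α ≤ 1) (hβ : -1 < β) :
    ∃ C > 0, ∀ n : ℕ, 0 < n →
      ∑ j ∈ Icc 1 n, cqWeight (-α) (n - j) * (j : ℝ) ^ β ≤ C * (n : ℝ) ^ (α + β) := by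
  rcases le_total 0 β with hβ0 | hβ0
  · exact ⟨α⁻¹, by positivity, fun n _ => sum_cqWeight_mul_rpow_le_of_nonneg hα0 hα1 hβ0 n⟩
  · have : 0 < β + 1 := by linarith
    exact ⟨_, by positivity, fun n hn => sum_cqWeight_mul_rpow_le_of_nonpos hα0 hα1 hβ hβ0 hn⟩

/-- Discrete fractional integral of a power:
`τ^α Σ_{j=1}^n a_{n-j}^{(-α)} (jτ)^β ≤ C (nτ)^{α+β}`. -/
theorem stmt15 (α β : ℝ) (hα0 : 0 < α) (hα1 : α < 1) (hβ : -1 < β) :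
    ∃ C > 0, ∀ τ : ℝ, 0 < τ → ∀ n : ℕ, 1 ≤ n →
      τ ^ α * ∑ j ∈ Finset.Icc 1 n, cqWeight (-α) (n - j) * ((j : ℝ) * τ) ^ β ≤
        C * ((n : ℝ) * τ) ^ (α + β) := by
  obtain ⟨C, hC, hsum⟩ := exists_sum_cqWeight_mul_rpow_le hα0 hα1.le hβ
  refine ⟨C, hC, fun τ hτ n hn => ?_⟩
  calc τ ^ α * ∑ j ∈ Icc 1 n, cqWeight (-α) (n - j) * ((j : ℝ) * τ) ^ β
      = τ ^ (α + β) * ∑ j ∈ Icc 1 n, cqWeight (-α) (n - j) * (j : ℝ) ^ β := by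
        simp_rw [mul_rpow (Nat.cast_nonneg _) hτ.le, rpow_add hτ, mul_sum]
        exact sum_congr rfl fun j _ => by ring
    _ ≤ τ ^ (α + β) * (C * (n : ℝ) ^ (α + β)) := by gcongr; exact hsum n hn
    _ = C * ((n : ℝ) * τ) ^ (α + β) := by
        rw [mul_rpow n.cast_nonneg hτ.le]
        ring
end
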